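/- For every integer k ≥ 3, the graph K_{k+1,k+1} minus a perfect matching is k-connected, has independence number k+1 (in particular greater than k), and every independent set of k vertices in it is a vertex cut. -/

import Mathlib

open SimpleGraph

/-- `G - S` is disconnected: some two remaining vertices are not connected. -/
def IsVertexCut {V : Type*} (G : SimpleGraph V) (S : Set V) : Prop :=
  ¬ (G.induce Sᶜ).Preconnected

/-- `G` is `k`-connected. -/
def KConnected {V : Type*} [Fintype V] (G : SimpleGraph V) (k : ℕ) : Prop :=
  k < Fintype.card V ∧ ∀ S : Finset V, S.card < k → ¬ IsVertexCut G ↑S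

/-- `S` is an independent set of `G`. -/
def IsIndep {V : Type*} (G : SimpleGraph V) (S : Set V) : Prop :=
  S.Pairwise fun u v => ¬ G.Adj u v

/-- `K_{s,s}` minus a perfect matching: `a i` is adjacent to `b j` iff `i ≠ j`. -/
def KssMinusPM (s : ℕ) : SimpleGraph (Fin s ⊕ Fin s) where
  Adj u v := (∃ i j, i ≠ j ∧ u = Sum.inl i ∧ v = Sum.inr j) ∨
    (∃ i j, i ≠ j ∧ u = Sum.inr i ∧ v = Sum.inl j)
  symm := by
    constructor
    rintro u v (⟨i, j, h, rfl, rfl⟩ | ⟨i, j, h, rfl, rfl⟩)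
    · exact Or.inr ⟨j, i, h.symm, rfl, rfl⟩
    · exact Or.inl ⟨j, i, h.symm, rfl, rfl⟩
  loopless := by
    constructor
    rintro u (⟨i, j, h, rfl, h2⟩ | ⟨i, j, h, rfl, h2⟩) <;> simp_all

/-!
Swapping the two sides is an automorphism, so each argument may fix a side. If at least three
right and two left vertices survive the deletion of `S`, any two surviving left vertices have a
common surviving right neighbour and every surviving right vertex has a surviving left neighbour;
deleting at most `n - 2` vertices leaves this situation on one of the two sides. An independent
set meeting both sides in `a i` and `b j` lies in `{a j, b i}`, so an independent set of at least
three vertices lies within one side; if it consists of all `a m` with `m ≠ i`, then `b i` is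
isolated in what remains.
-/

open Finset

section VertexCut

variable {V W : Type*} {G : SimpleGraph V}

lemma isVertexCut_image_iff {G' : SimpleGraph W} (e : G ≃g G') (S : Set V) :
    IsVertexCut G' (e '' S) ↔ IsVertexCut G S := by
  have hbij : Set.BijOn e Sᶜ (e '' S)ᶜ :=
    Set.image_compl_eq e.bijective ▸ e.injective.injOn.bijOn_image
  exact (e.induce hbij).preconnected_iff.not.symm

lemma isVertexCut_of_neighborSet_subset {S : Set V} {v w : V} (hv : v ∉ S) (hw : w ∉ S)
    (hvw : v ≠ w) (hN : G.neighborSet v ⊆ S) : IsVertexCut G S := by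
  rintro hpre
  obtain ⟨p⟩ := hpre ⟨v, hv⟩ ⟨w, hw⟩
  have hp : ¬ p.Nil := Walk.not_nil_of_ne (by simpa using hvw)
  exact p.snd.2 (hN (p.adj_snd hp))

lemma preconnected_of_exists_reachable_mem (A : Set V)
    (hA : ∀ a ∈ A, ∀ b ∈ A, G.Reachable a b) (hV : ∀ v, ∃ a ∈ A, G.Reachable v a) :
    G.Preconnected := by
  intro u v
  obtain ⟨a, ha, hua⟩ := hV u
  obtain ⟨b, hb, hvb⟩ := hV v
  exact hua.trans ((hA a ha b hb).trans hvb.symm)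

end VertexCut

lemma Finset.exists_notMem_of_card_lt {α : Type*} [Fintype α] {t : Finset α}
    (h : #t < Fintype.card α) : ∃ a, a ∉ t := by
  obtain ⟨a, -, ha⟩ :=
    exists_mem_notMem_of_card_lt_card (s := t) (t := univ) (by rwa [card_univ])
  exact ⟨a, ha⟩

namespace KssMinusPM

variable {n : ℕ}

@[simp]
lemma adj_inl_inr {i j : Fin n} : (KssMinusPM n).Adj (.inl i) (.inr j) ↔ i ≠ j := by
  simp [KssMinusPM]

@[simp]
lemma adj_inr_inl {i j : Fin n} : (KssMinusPM n).Adj (.inr i) (.inl j) ↔ i ≠ j := by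
  simp [KssMinusPM]

@[simp]
lemma not_adj_inl_inl {i j : Fin n} : ¬ (KssMinusPM n).Adj (.inl i) (.inl j) := by
  simp [KssMinusPM]

@[simp]
lemma not_adj_inr_inr {i j : Fin n} : ¬ (KssMinusPM n).Adj (.inr i) (.inr j) := by
  simp [KssMinusPM]

def swapIso : KssMinusPM n ≃g KssMinusPM n where
  toEquiv := Equiv.sumComm _ _
  map_rel_iff' := by rintro (i | i) (j | j) <;> simp

lemma isVertexCut_map_sumComm_iff (S : Finset (Fin n ⊕ Fin n)) :
    IsVertexCut (KssMinusPM n) (S.map (Equiv.sumComm _ _).toEmbedding : Set (Fin n ⊕ Fin n)) ↔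
      IsVertexCut (KssMinusPM n) (S : Set (Fin n ⊕ Fin n)) := by
  rw [coe_map]
  exact isVertexCut_image_iff (swapIso (n := n)) S

lemma preconnected_induce_compl (S : Finset (Fin n ⊕ Fin n)) (hL : #S.toLeft + 2 ≤ n)
    (hR : #S.toRight + 3 ≤ n) :
    ((KssMinusPM n).induce (S : Set (Fin n ⊕ Fin n))ᶜ).Preconnected := by
  have step {u v} (hu : u ∉ S) (hv : v ∉ S) (h : (KssMinusPM n).Adj u v) :
      ((KssMinusPM n).induce (S : Set (Fin n ⊕ Fin n))ᶜ).Reachable ⟨u, hu⟩ ⟨v, hv⟩ :=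
    (induce_adj.2 h).reachable
  refine preconnected_of_exists_reachable_mem {v | ∃ i, v.1 = .inl i} ?_ ?_
  · rintro ⟨_, hi⟩ ⟨i, rfl⟩ ⟨_, hi'⟩ ⟨i', rfl⟩
    have := card_insert_le i (insert i' S.toRight)
    have := card_insert_le i' S.toRight
    obtain ⟨j, hj⟩ := exists_notMem_of_card_lt (t := insert i (insert i' S.toRight))
      (by rw [Fintype.card_fin]; omega)
    simp only [mem_insert, mem_toRight, not_or] at hj
    exact (step hi hj.2.2 (adj_inl_inr.2 (Ne.symm hj.1))).trans
      (step hj.2.2 hi' (adj_inr_inl.2 hj.2.1))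
  · rintro ⟨i | j, hj⟩
    · exact ⟨_, ⟨i, rfl⟩, .rfl⟩
    obtain ⟨m, hm⟩ := exists_notMem_of_card_lt (t := insert j S.toLeft)
      ((card_insert_le _ _).trans_lt (by rw [Fintype.card_fin]; omega))
    simp only [mem_insert, mem_toLeft, not_or] at hm
    exact ⟨⟨_, hm.2⟩, ⟨m, rfl⟩, step hj hm.2 (adj_inr_inl.2 (Ne.symm hm.1))⟩

lemma not_isVertexCut_of_card_add_two_le (hn : 3 ≤ n) (S : Finset (Fin n ⊕ Fin n))
    (hS : #S + 2 ≤ n) : ¬ IsVertexCut (KssMinusPM n) ↑S := by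
  have hsplit := card_toLeft_add_card_toRight (u := S)
  by_cases hR : #S.toRight + 3 ≤ n
  · exact not_not.2 (preconnected_induce_compl S (by omega) hR)
  · rw [← isVertexCut_map_sumComm_iff]
    refine not_not.2 (preconnected_induce_compl _ ?_ ?_) <;>
      simp only [toLeft_map_sumComm, toRight_map_sumComm] <;> omega

lemma isIndep_map_inl :
    IsIndep (KssMinusPM n) (univ.map .inl : Finset (Fin n ⊕ Fin n)) := by
  rintro _ hu _ hv -
  simp only [coe_map, coe_univ, Set.image_univ, Set.mem_range] at hu hv
  obtain ⟨i, rfl⟩ := hu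
  obtain ⟨j, rfl⟩ := hv
  exact not_adj_inl_inl

lemma toLeft_eq_empty_or_toRight_eq_empty_of_isIndep {S : Finset (Fin n ⊕ Fin n)}
    (hS : IsIndep (KssMinusPM n) ↑S) (h : 2 < #S) : S.toLeft = ∅ ∨ S.toRight = ∅ := by
  by_contra! hne
  obtain ⟨⟨a, ha⟩, ⟨b, hb⟩⟩ := hne
  have hL : S.toLeft ⊆ {b} := fun x hx => by
    by_contra hxb
    exact hS (mem_toLeft.1 hx) (mem_toRight.1 hb) (by simp) (adj_inl_inr.2 (by simpa using hxb))
  have hR : S.toRight ⊆ {a} := fun y hy => by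
    by_contra hya
    exact hS (mem_toLeft.1 ha) (mem_toRight.1 hy) (by simp)
      (adj_inl_inr.2 (Ne.symm (by simpa using hya)))
  have := card_le_card hL
  have := card_le_card hR
  have := card_toLeft_add_card_toRight (u := S)
  simp only [card_singleton] at *
  omega

lemma card_le_of_isIndep (hn : 2 ≤ n) {S : Finset (Fin n ⊕ Fin n)}
    (hS : IsIndep (KssMinusPM n) ↑S) : #S ≤ n := by
  by_contra! h
  have hsplit := card_toLeft_add_card_toRight (u := S)
  have hL := card_le_univ S.toLeft
  have hR := card_le_univ S.toRight
  simp only [Fintype.card_fin] at hL hR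
  rcases toLeft_eq_empty_or_toRight_eq_empty_of_isIndep hS (by omega) with h' | h' <;>
    simp only [h', card_empty] at hsplit <;> omega

lemma isVertexCut_of_toRight_eq_empty {S : Finset (Fin n ⊕ Fin n)} (hR : S.toRight = ∅)
    (hL : #S.toLeft + 1 = n) : IsVertexCut (KssMinusPM n) ↑S := by
  obtain ⟨i, hi⟩ := exists_notMem_of_card_lt (t := S.toLeft) (by rw [Fintype.card_fin]; omega)
  have hLeq : S.toLeft = univ.erase i :=
    eq_of_subset_of_card_le (fun x hx => mem_erase.2 ⟨fun h => hi (h ▸ hx), mem_univ _⟩)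
      (by rw [card_erase_of_mem (mem_univ _), card_univ, Fintype.card_fin]; omega)
  refine isVertexCut_of_neighborSet_subset (v := .inr i) (w := .inl i) ?_ (by simpa using hi)
    (by simp) ?_
  · simpa using (mem_toRight (u := S)).not.1 (hR ▸ notMem_empty i)
  · rintro (m | m) hm
    · have hmi : i ≠ m := adj_inr_inl.1 hm
      simpa [← mem_toLeft, hLeq] using hmi.symm
    · exact absurd hm not_adj_inr_inr

lemma isVertexCut_of_isIndep {S : Finset (Fin n ⊕ Fin n)} (hS : IsIndep (KssMinusPM n) ↑S)
    (h3 : 3 ≤ #S) (hcard : #S + 1 = n) : IsVertexCut (KssMinusPM n) ↑S := by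
  have hsplit := card_toLeft_add_card_toRight (u := S)
  rcases toLeft_eq_empty_or_toRight_eq_empty_of_isIndep hS (by omega) with hL | hR
  · rw [hL, card_empty] at hsplit
    rw [← isVertexCut_map_sumComm_iff]
    exact isVertexCut_of_toRight_eq_empty (by rwa [toRight_map_sumComm])
      (by rw [toLeft_map_sumComm]; omega)
  · exact isVertexCut_of_toRight_eq_empty hR (by simp only [hR, card_empty] at hsplit; omega)

end KssMinusPM

open KssMinusPM in
theorem stmt5 (k : ℕ) (hk : 3 ≤ k) :
    KConnected (KssMinusPM (k + 1)) k ∧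
    (∃ S : Finset (Fin (k + 1) ⊕ Fin (k + 1)),
        IsIndep (KssMinusPM (k + 1)) ↑S ∧ S.card = k + 1) ∧
    (∀ S : Finset (Fin (k + 1) ⊕ Fin (k + 1)),
        IsIndep (KssMinusPM (k + 1)) ↑S → S.card ≤ k + 1) ∧
    (∀ S : Finset (Fin (k + 1) ⊕ Fin (k + 1)),
        IsIndep (KssMinusPM (k + 1)) ↑S → S.card = k →
          IsVertexCut (KssMinusPM (k + 1)) ↑S) := by
  refine ⟨⟨?_, fun S hS => not_isVertexCut_of_card_add_two_le (by omega) S (by omega)⟩,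
    ⟨_, isIndep_map_inl, by simp⟩,
    fun S hS => card_le_of_isIndep (by omega) hS,
    fun S hS hcard => isVertexCut_of_isIndep hS (by omega) (by omega)⟩
  simp only [Fintype.card_sum, Fintype.card_fin]
  omega
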